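/- arXiv:2009.06336 — 4 statements merged into one kernel-verified Lean document; each statement's English description precedes it below -/
import Mathlib

section
/- The strict order relation x < y on ℚ is definable by the formula ∃ t u v w, x ≠ y ∧ x + t·t + u·u + v·v + w·w = y; i.e., for all rationals x, y: x < y ↔ (x ≠ y ∧ ∃ t u v w : ℚ, x + t² + u² + v² + w² = y). -/
theorem Rat.exists_sum_four_squares {q : ℚ} (hq : 0 ≤ q) :
    ∃ a b c d : ℚ, a ^ 2 + b ^ 2 + c ^ 2 + d ^ 2 = q := by
  obtain ⟨n, hn⟩ := Int.eq_ofNat_of_zero_le (Rat.num_nonneg.mpr hq)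
  obtain ⟨a, b, c, d, habcd⟩ := Nat.sum_four_squares (n * q.den)
  have hden : (q.den : ℚ) ≠ 0 := by exact_mod_cast q.den_ne_zero
  -- `q = num / den = (num * den) / den ^ 2`, and `num * den` is a natural number.
  have hq_eq : q = (n * q.den : ℕ) / (q.den : ℚ) ^ 2 := by
    conv_lhs => rw [← Rat.num_div_den q, hn]
    push_cast
    field_simp
  refine ⟨a / q.den, b / q.den, c / q.den, d / q.den, Eq.trans ?_ hq_eq.symm⟩
  rw [← habcd]
  push_cast
  ring

theorem rat_lt_definable (x y : ℚ) :
    x < y ↔ (x ≠ y ∧ ∃ t u v w : ℚ, x + t * t + u * u + v * v + w * w = y) := by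
  constructor
  · intro hxy
    obtain ⟨t, u, v, w, h⟩ := Rat.exists_sum_four_squares (sub_nonneg.mpr hxy.le)
    exact ⟨hxy.ne, t, u, v, w, by linear_combination h⟩
  · rintro ⟨hne, t, u, v, w, rfl⟩
    refine lt_of_le_of_ne ?_ hne
    linarith [mul_self_nonneg t, mul_self_nonneg u, mul_self_nonneg v, mul_self_nonneg w]
end

section
/- For all natural numbers x, y, z with z ≠ 0: z = x + y if and only if (z·x + 1)·(z·y + 1) = z·z·(x·y + 1) + 1. (Tarski–Robinson identity defining addition from successor and multiplication.) -/
theorem tarski_robinson_nat (x y z : ℕ) (hz : z ≠ 0) :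
    z = x + y ↔ (z * x + 1) * (z * y + 1) = z * z * (x * y + 1) + 1 := by
  have lhs : (z * x + 1) * (z * y + 1) = z * z * (x * y) + z * (x + y) + 1 := by ring
  have rhs : z * z * (x * y + 1) + 1 = z * z * (x * y) + z * z + 1 := by ring
  rw [lhs, rhs, Nat.add_right_cancel_iff, Nat.add_left_cancel_iff,
    Nat.mul_left_cancel_iff (Nat.pos_of_ne_zero hz), eq_comm]
end

section
/- For integers n and t, and integers r, s, the following are equivalent: (∃ y : ℤ, r < n·y ∧ n·y ≤ s) ↔ (∃ i : ℕ, i < n ∧ s ≡ i (mod n) ∧ r + i < s), where n is a positive integer. -/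
/-!
The largest multiple of `n` not exceeding `s` is `s - s % n`, so a multiple of `n` lies in
`(r, s]` exactly when `r + s % n < s`; and `s % n` is the only `i ∈ [0, n)` with `n ∣ s - i`.
-/

namespace Int

theorem exists_mul_mem_Ioc_iff {n : ℤ} (hn : 0 < n) (r s : ℤ) :
    (∃ y : ℤ, r < n * y ∧ n * y ≤ s) ↔ r + s % n < s := by
  have hs : n * (s / n) + s % n = s := mul_ediv_add_emod s n
  constructor
  · rintro ⟨y, hry, hys⟩
    have hy : y ≤ s / n := (Int.le_ediv_iff_mul_le hn).2 (by linarith)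
    linarith [mul_le_mul_of_nonneg_left hy hn.le]
  · intro h
    exact ⟨s / n, by linarith, by linarith [emod_nonneg s hn.ne']⟩

theorem dvd_sub_iff_eq_emod {n i s : ℤ} (hi₀ : 0 ≤ i) (hin : i < n) : n ∣ s - i ↔ i = s % n := by
  rw [← modEq_iff_dvd, ModEq, emod_eq_of_lt hi₀ hin]

end Int

theorem bounded_div_qe (n : ℤ) (hn : 0 < n) (r s : ℤ) :
    (∃ y : ℤ, r < n * y ∧ n * y ≤ s) ↔
      (∃ i : ℕ, (i : ℤ) < n ∧ n ∣ s - (i : ℤ) ∧ r + (i : ℤ) < s) := by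
  rw [Int.exists_mul_mem_Ioc_iff hn]
  have hmod : 0 ≤ s % n := Int.emod_nonneg s hn.ne'
  constructor
  · intro h
    refine ⟨(s % n).toNat, ?_⟩
    rw [Int.toNat_of_nonneg hmod, Int.dvd_sub_iff_eq_emod hmod (Int.emod_lt_of_pos s hn)]
    exact ⟨Int.emod_lt_of_pos s hn, rfl, h⟩
  · rintro ⟨i, hin, hdvd, hi⟩
    rwa [← (Int.dvd_sub_iff_eq_emod (Int.natCast_nonneg i) hin).1 hdvd]
end

section
/- For any finite list of positive rationals x₁, …, x_q, any positive integer n, and naturals m₁, …, m_q > 1 none of which divides n, there exists a positive rational y such that for every j ≤ q, yⁿ·x_j is not an m_j-th power of a positive rational. -/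
/-!
Take for `y` a prime `p` that divides no numerator or denominator of the `x j`. Then the
`p`-adic valuation of `p ^ n * x j` is `n`, while that of an `m j`-th power is a multiple
of `m j`.
-/

theorem padicValNat_eq_zero_of_lt {p k : ℕ} (hk : k < p) : padicValNat p k = 0 := by
  rcases k.eq_zero_or_pos with rfl | hk₀
  · exact padicValNat_zero_right p
  · exact padicValNat.eq_zero_of_not_dvd (Nat.not_dvd_of_pos_of_lt hk₀ hk)

theorem padicValRat_eq_zero_of_lt {p : ℕ} {r : ℚ} (hnum : r.num.natAbs < p) (hden : r.den < p) :
    padicValRat p r = 0 := by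
  simp [padicValRat, padicValInt, padicValNat_eq_zero_of_lt hnum, padicValNat_eq_zero_of_lt hden]

theorem exists_prime_forall_padicValRat_eq_zero {ι : Type*} [Fintype ι] (x : ι → ℚ) :
    ∃ p : ℕ, p.Prime ∧ ∀ i, padicValRat p (x i) = 0 := by
  obtain ⟨p, hNp, hp⟩ := Nat.exists_infinite_primes (∑ i, ((x i).num.natAbs + (x i).den) + 1)
  refine ⟨p, hp, fun i => padicValRat_eq_zero_of_lt ?_ ?_⟩ <;>
  · have := Finset.single_le_sum (f := fun i => (x i).num.natAbs + (x i).den)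
      (fun _ _ => Nat.zero_le _) (Finset.mem_univ i)
    omega

theorem dvd_padicValRat_pow (p : ℕ) [Fact p.Prime] (w : ℚ) (m : ℕ) :
    (m : ℤ) ∣ padicValRat p (w ^ m) := by
  rw [padicValRat.pow]
  exact dvd_mul_right _ _

theorem avoid_powers_general (q : ℕ) (x : Fin q → ℚ)
    (n : ℕ) (m : Fin q → ℕ)
    (hnd : ∀ j, ¬ (m j ∣ n)) :
    ∃ y : ℚ, 0 < y ∧ ∀ j, ¬ ∃ w : ℚ, 0 < w ∧ y ^ n * x j = w ^ (m j) := by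
  obtain ⟨p, hp, hpx⟩ := exists_prime_forall_padicValRat_eq_zero x
  have : Fact p.Prime := ⟨hp⟩
  have hp₀ : (0 : ℚ) < p := by exact_mod_cast hp.pos
  refine ⟨p, hp₀, fun j ⟨w, hw₀, hw⟩ => hnd j ?_⟩
  have hx : x j ≠ 0 := by
    rintro hx
    rw [hx, mul_zero] at hw
    exact (pow_pos hw₀ _).ne hw
  have hval : padicValRat p ((p : ℚ) ^ n * x j) = n := by
    rw [padicValRat.mul (pow_pos hp₀ n).ne' hx, padicValRat.pow, padicValRat.self hp.one_lt, hpx j]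
    ring
  have hdvd := dvd_padicValRat_pow p w (m j)
  rw [← hw, hval] at hdvd
  exact_mod_cast hdvd

theorem avoid_powers (q : ℕ) (x : Fin q → ℚ) (hx : ∀ j, 0 < x j)
    (n : ℕ) (hn : 0 < n) (m : Fin q → ℕ) (hm : ∀ j, 1 < m j)
    (hnd : ∀ j, ¬ (m j ∣ n)) :
    ∃ y : ℚ, 0 < y ∧ ∀ j, ¬ ∃ w : ℚ, 0 < w ∧ y ^ n * x j = w ^ (m j) :=
  avoid_powers_general q x n m hnd
end
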